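/- arXiv:1205.1289 — 2 statements merged into one kernel-verified Lean document; each statement's English description precedes it below -/
import Mathlib

section
/- Let E ⊆ ℝ^d satisfy the Birkhoff property and suppose that E + q₀ ≠ E for some q₀ ∈ ℤ^d. If p and p′ are vectors in ℝ^d with |p| = |p′| = 1 such that for every q ∈ ℤ^d, q·p > 0 implies E + q ⊆ E, and for every q ∈ ℤ^d, q·p′ > 0 implies E + q ⊆ E, then p = p′. -/
open scoped RealInnerProductSpace

noncomputable def vec {d : ℕ} (q : Fin d → ℤ) : EuclideanSpace ℝ (Fin d) :=
  WithLp.toLp 2 (fun i => (q i : ℝ))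

/-- The translate `E + q` of a set `E ⊆ ℝ^d` by an integer vector `q ∈ ℤ^d`. -/
def transl {d : ℕ} (E : Set (EuclideanSpace ℝ (Fin d))) (q : Fin d → ℤ) :
    Set (EuclideanSpace ℝ (Fin d)) :=
  (fun x => x + vec q) '' E

/-!
If `p ≠ p'`, some integer vector `q` has `q·p > 0 > q·p'` (the open cone of such vectors is
nonempty, and rescaled roundings of any of its points land in it). For every `a ∈ ℤ^d` and
large `n` we then have `(a + n q)·p > 0` and `(-n q)·p' > 0`, so
`E + a = (E + a + n q) - n q ⊆ E - n q ⊆ E`. Applied to `a = ±q₀` this gives `E + q₀ = E`.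
-/

open Filter Topology

section Vec

variable {d : ℕ}

lemma vec_add (a b : Fin d → ℤ) : vec (a + b) = vec a + vec b := by
  ext i
  simp [vec]

lemma vec_zero : vec (0 : Fin d → ℤ) = 0 := by
  ext i
  simp [vec]

lemma vec_neg (a : Fin d → ℤ) : vec (-a) = -vec a := by
  ext i
  simp [vec]

lemma vec_nsmul (n : ℕ) (a : Fin d → ℤ) : vec (n • a) = (n : ℝ) • vec a := by
  ext i
  simp [vec]

lemma tendsto_inv_mul_round (t : ℝ) :
    Tendsto (fun N : ℕ => (N : ℝ)⁻¹ * round (N * t)) atTop (𝓝 t) := by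
  rw [tendsto_iff_norm_sub_tendsto_zero]
  refine squeeze_zero_norm' ?_ (tendsto_inv_atTop_zero.comp tendsto_natCast_atTop_atTop)
  filter_upwards [eventually_gt_atTop 0] with N hN
  have hinv : (0 : ℝ) < (N : ℝ)⁻¹ := inv_pos.2 (by exact_mod_cast hN)
  have hsplit : (N : ℝ)⁻¹ * round (N * t) - t = -((N : ℝ)⁻¹ * (N * t - round (N * t))) := by
    field_simp
    ring
  rw [norm_norm, Function.comp_apply, Real.norm_eq_abs, hsplit, abs_neg, abs_mul,
    abs_of_pos hinv]
  calc (N : ℝ)⁻¹ * |N * t - round (N * t)| ≤ (N : ℝ)⁻¹ * (1 / 2) := by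
        gcongr
        exact abs_sub_round _
    _ ≤ (N : ℝ)⁻¹ := by linarith

lemma tendsto_inv_smul_vec_round (x : EuclideanSpace ℝ (Fin d)) :
    Tendsto (fun N : ℕ => (N : ℝ)⁻¹ • vec (fun i => round (N * x i))) atTop (𝓝 x) := by
  have hcoord : Tendsto (fun N : ℕ => fun i => (N : ℝ)⁻¹ * round (N * x i)) atTop (𝓝 x.ofLp) :=
    tendsto_pi_nhds.2 fun i => tendsto_inv_mul_round (x i)
  exact ((PiLp.continuous_toLp 2 _).tendsto _).comp hcoord

lemma exists_vec_mem_of_isOpen_of_smul_mem {U : Set (EuclideanSpace ℝ (Fin d))} (hU : IsOpen U)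
    (hcone : ∀ c : ℝ, 0 < c → ∀ y ∈ U, c • y ∈ U) {x : EuclideanSpace ℝ (Fin d)} (hx : x ∈ U) :
    ∃ q : Fin d → ℤ, vec q ∈ U := by
  obtain ⟨N, hNU, hN⟩ :=
    (((tendsto_inv_smul_vec_round x).eventually (hU.mem_nhds hx)).and
      (eventually_gt_atTop 0)).exists
  refine ⟨fun i => round (N * x i), ?_⟩
  simpa [smul_smul, Nat.cast_ne_zero.2 hN.ne'] using hcone N (by exact_mod_cast hN) _ hNU

end Vec

lemma inner_sub_pos_and_neg_of_norm_eq_one {F : Type*} [NormedAddCommGroup F]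
    [InnerProductSpace ℝ F] {p p' : F} (hp : ‖p‖ = 1) (hp' : ‖p'‖ = 1) (hne : p ≠ p') :
    0 < ⟪p - p', p⟫ ∧ ⟪p - p', p'⟫ < 0 := by
  have hlt : ⟪p, p'⟫ < 1 := by
    have hsq := norm_sub_sq_real p p'
    have hpos : 0 < ‖p - p'‖ := norm_pos_iff.2 (sub_ne_zero.2 hne)
    rw [hp, hp'] at hsq
    nlinarith
  have hpp : ⟪p, p⟫ = 1 := by rw [real_inner_self_eq_norm_sq, hp, one_pow]
  have hp'p' : ⟪p', p'⟫ = 1 := by rw [real_inner_self_eq_norm_sq, hp', one_pow]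
  rw [inner_sub_left, inner_sub_left, hpp, hp'p', real_inner_comm p p']
  constructor <;> linarith

lemma exists_inner_vec_pos_and_neg {d : ℕ} {p p' : EuclideanSpace ℝ (Fin d)} (hp : ‖p‖ = 1)
    (hp' : ‖p'‖ = 1) (hne : p ≠ p') :
    ∃ q : Fin d → ℤ, 0 < ⟪vec q, p⟫ ∧ ⟪vec q, p'⟫ < 0 := by
  have hinner : Continuous fun y : EuclideanSpace ℝ (Fin d) => (⟪y, p⟫, ⟪y, p'⟫) :=
    (continuous_id.inner continuous_const).prodMk (continuous_id.inner continuous_const)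
  refine exists_vec_mem_of_isOpen_of_smul_mem (U := {y | 0 < ⟪y, p⟫ ∧ ⟪y, p'⟫ < 0}) ?_ ?_
    (inner_sub_pos_and_neg_of_norm_eq_one hp hp' hne)
  · exact (isOpen_lt continuous_const (continuous_fst.comp hinner)).inter
      (isOpen_lt (continuous_snd.comp hinner) continuous_const)
  · rintro c hc y ⟨hyp, hyp'⟩
    rw [Set.mem_ofPred_eq, real_inner_smul_left, real_inner_smul_left]
    exact ⟨mul_pos hc hyp, mul_neg_of_pos_of_neg hc hyp'⟩

lemma tendsto_inner_vec_nsmul_atTop {d : ℕ} {q : Fin d → ℤ} {p : EuclideanSpace ℝ (Fin d)}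
    (hq : 0 < ⟪vec q, p⟫) : Tendsto (fun n : ℕ => ⟪vec (n • q), p⟫) atTop atTop := by
  simp only [vec_nsmul, real_inner_smul_left]
  exact tendsto_natCast_atTop_atTop.atTop_mul_const hq

section Transl

variable {d : ℕ} (E : Set (EuclideanSpace ℝ (Fin d)))

lemma transl_transl (a b : Fin d → ℤ) : transl (transl E a) b = transl E (a + b) := by
  simp only [transl, Set.image_image, vec_add, add_assoc]

lemma transl_zero : transl E 0 = E := by
  simp [transl, vec_zero]

variable {E}

lemma transl_mono {F : Set (EuclideanSpace ℝ (Fin d))} (h : E ⊆ F) (a : Fin d → ℤ) :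
    transl E a ⊆ transl F a :=
  Set.image_mono h

lemma transl_subset_of_add_subset {a b : Fin d → ℤ} (hab : transl E (a + b) ⊆ E)
    (hb : transl E (-b) ⊆ E) : transl E a ⊆ E := by
  have h := transl_mono hab (-b)
  rw [transl_transl, add_neg_cancel_right] at h
  exact h.trans hb

lemma transl_eq_of_forall_subset (h : ∀ a, transl E a ⊆ E) (a : Fin d → ℤ) : transl E a = E := by
  refine (h a).antisymm ?_
  have h' := transl_mono (h (-a)) a
  rwa [transl_transl, neg_add_cancel, transl_zero] at h'

end Transl

theorem stmt1_general (d : ℕ) (E : Set (EuclideanSpace ℝ (Fin d)))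
    (q₀ : Fin d → ℤ) (hq₀ : transl E q₀ ≠ E)
    (p p' : EuclideanSpace ℝ (Fin d)) (hp : ‖p‖ = 1) (hp' : ‖p'‖ = 1)
    (h1 : ∀ q : Fin d → ℤ, 0 < ⟪vec q, p⟫ → transl E q ⊆ E)
    (h2 : ∀ q : Fin d → ℤ, 0 < ⟪vec q, p'⟫ → transl E q ⊆ E) :
    p = p' := by
  by_contra hne
  obtain ⟨q, hqp, hqp'⟩ := exists_inner_vec_pos_and_neg hp hp' hne
  refine hq₀ (transl_eq_of_forall_subset (fun a => ?_) q₀)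
  have hadd : Tendsto (fun n : ℕ => ⟪vec (a + n • q), p⟫) atTop atTop := by
    simp only [vec_add, inner_add_left]
    exact tendsto_atTop_add_const_left _ _ (tendsto_inner_vec_nsmul_atTop hqp)
  have hneg : Tendsto (fun n : ℕ => ⟪vec (-(n • q)), p'⟫) atTop atTop := by
    simpa only [smul_neg] using
      tendsto_inner_vec_nsmul_atTop (q := -q) (by rwa [vec_neg, inner_neg_left, neg_pos])
  obtain ⟨n, hn, hn'⟩ := ((hadd.eventually_gt_atTop 0).and (hneg.eventually_gt_atTop 0)).exists
  exact transl_subset_of_add_subset (h1 _ hn) (h2 _ hn')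

/-- Uniqueness of the direction in the Birkhoff property: if `E` satisfies the Birkhoff
property, `E + q₀ ≠ E` for some `q₀ ∈ ℤ^d`, and `p, p'` are unit vectors such that
`q·p > 0` implies `E + q ⊆ E` and `q·p' > 0` implies `E + q ⊆ E`, then `p = p'`. -/
theorem stmt1 (d : ℕ) (E : Set (EuclideanSpace ℝ (Fin d)))
    (hBirkhoff : ∀ q : Fin d → ℤ, transl E q ⊆ E ∨ E ⊆ transl E q)
    (q₀ : Fin d → ℤ) (hq₀ : transl E q₀ ≠ E)
    (p p' : EuclideanSpace ℝ (Fin d)) (hp : ‖p‖ = 1) (hp' : ‖p'‖ = 1)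
    (h1 : ∀ q : Fin d → ℤ, 0 < ⟪vec q, p⟫ → transl E q ⊆ E)
    (h2 : ∀ q : Fin d → ℤ, 0 < ⟪vec q, p'⟫ → transl E q ⊆ E) :
    p = p' :=
  stmt1_general d E q₀ hq₀ p p' hp hp' h1 h2
end

section
/- Let p ∈ ℝ^d with |p| = 1, let M > 0, a ∈ ℝ, and let E ⊆ ℝ^d satisfy {x : x·p > a + M} ⊆ E ⊆ {x : x·p > a − M} together with the strong Birkhoff property in the direction p: E + q ⊆ E for every q ∈ ℤ^d with q·p ≥ 0. Then for every x ∈ ℝ^d the set {q·p : q ∈ ℤ^d, x ∈ E + q} is nonempty and bounded above, so v(x) := sup{q·p : q ∈ ℤ^d, x ∈ E + q} is a well-defined real number, and for every q ∈ ℤ^d one has {x : v(x) > q·p} ⊆ E + q ⊆ {x : v(x) ≥ q·p}. -/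
open scoped RealInnerProductSpace

/-!
By the Birkhoff property the translates `E + q` decrease as `q·p` grows. The slab bounds
on `E` cap the heights `q·p` of the translates containing `x` by `x·p - (a - M)`, and
every lattice height below `x·p - (a + M)` is one of them; such heights exist because
`p ≠ 0` has a nonzero coordinate. The sandwich for `v = sup` then follows from the
monotonicity of the translates and the definition of the supremum.
-/

section

variable {d : ℕ}

def StrongBirkhoff (E : Set (EuclideanSpace ℝ (Fin d))) (p : EuclideanSpace ℝ (Fin d)) :
    Prop :=
  ∀ q : Fin d → ℤ, 0 ≤ ⟪vec q, p⟫ → transl E q ⊆ E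

def heights (E : Set (EuclideanSpace ℝ (Fin d))) (p x : EuclideanSpace ℝ (Fin d)) : Set ℝ :=
  {t : ℝ | ∃ q : Fin d → ℤ, t = ⟪vec q, p⟫ ∧ x ∈ transl E q}

lemma mem_transl {E : Set (EuclideanSpace ℝ (Fin d))} {q : Fin d → ℤ}
    {x : EuclideanSpace ℝ (Fin d)} : x ∈ transl E q ↔ x - vec q ∈ E := by
  constructor
  · rintro ⟨y, hy, rfl⟩
    simpa using hy
  · intro h
    exact ⟨x - vec q, h, by simp⟩

lemma vec_sub (q q' : Fin d → ℤ) : vec (q - q') = vec q - vec q' := by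
  ext i
  simp [vec]

lemma vec_zsmul (k : ℤ) (q : Fin d → ℤ) : vec (k • q) = (k : ℝ) • vec q := by
  ext i
  simp [vec]

lemma vec_single (i : Fin d) (k : ℤ) :
    vec (Pi.single i k) = EuclideanSpace.single i (k : ℝ) := by
  ext j
  by_cases h : j = i
  · subst h; simp [vec]
  · simp [vec, h]

lemma exists_inner_vec_pos {p : EuclideanSpace ℝ (Fin d)} (hp : p ≠ 0) :
    ∃ q : Fin d → ℤ, 0 < ⟪vec q, p⟫ := by
  obtain ⟨i, hi⟩ : ∃ i, p i ≠ 0 := by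
    by_contra! h
    exact hp (PiLp.ext h)
  refine ⟨Pi.single i (SignType.sign (p i) : ℤ), ?_⟩
  rw [vec_single, EuclideanSpace.inner_single_left]
  rcases hi.lt_or_gt with hneg | hpos
  · simp [sign_neg hneg, hneg]
  · simp [sign_pos hpos, hpos]

lemma exists_inner_vec_lt {p : EuclideanSpace ℝ (Fin d)} (hp : p ≠ 0) (c : ℝ) :
    ∃ q : Fin d → ℤ, ⟪vec q, p⟫ < c := by
  obtain ⟨q, hq⟩ := exists_inner_vec_pos hp
  obtain ⟨k, hk⟩ := exists_int_lt (c / ⟪vec q, p⟫)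
  refine ⟨k • q, ?_⟩
  rwa [vec_zsmul, real_inner_smul_left, ← lt_div_iff₀ hq]

lemma heights_nonempty {E : Set (EuclideanSpace ℝ (Fin d))} {p : EuclideanSpace ℝ (Fin d)}
    (hp : p ≠ 0) {c : ℝ} (hupper : {x | c < ⟪x, p⟫} ⊆ E) (x : EuclideanSpace ℝ (Fin d)) :
    (heights E p x).Nonempty := by
  obtain ⟨q, hq⟩ := exists_inner_vec_lt hp (⟪x, p⟫ - c)
  refine ⟨_, q, rfl, mem_transl.2 (hupper ?_)⟩
  show c < ⟪x - vec q, p⟫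
  rw [inner_sub_left]
  linarith

lemma bddAbove_heights {E : Set (EuclideanSpace ℝ (Fin d))} {p : EuclideanSpace ℝ (Fin d)}
    {c : ℝ} (hlower : E ⊆ {x | c < ⟪x, p⟫}) (x : EuclideanSpace ℝ (Fin d)) :
    BddAbove (heights E p x) := by
  refine ⟨⟪x, p⟫ - c, ?_⟩
  rintro t ⟨q, rfl, hx⟩
  have hq : c < ⟪x - vec q, p⟫ := hlower (mem_transl.1 hx)
  rw [inner_sub_left] at hq
  linarith

lemma StrongBirkhoff.transl_subset_transl {E : Set (EuclideanSpace ℝ (Fin d))}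
    {p : EuclideanSpace ℝ (Fin d)} (hE : StrongBirkhoff E p) {q q' : Fin d → ℤ}
    (hqq' : ⟪vec q, p⟫ ≤ ⟪vec q', p⟫) : transl E q' ⊆ transl E q := by
  intro x hx
  have hshift : x - vec q = (x - vec q') + vec (q' - q) := by
    rw [vec_sub]
    abel
  have hpos : 0 ≤ ⟪vec (q' - q), p⟫ := by
    rw [vec_sub, inner_sub_left]
    linarith
  rw [mem_transl, hshift]
  exact hE (q' - q) hpos ⟨_, mem_transl.1 hx, rfl⟩

lemma StrongBirkhoff.mem_transl_of_lt_sSup {E : Set (EuclideanSpace ℝ (Fin d))}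
    {p x : EuclideanSpace ℝ (Fin d)} (hE : StrongBirkhoff E p) (hne : (heights E p x).Nonempty)
    {q : Fin d → ℤ} (hq : ⟪vec q, p⟫ < sSup (heights E p x)) : x ∈ transl E q := by
  obtain ⟨_, ⟨q', rfl, hxq'⟩, hlt⟩ := exists_lt_of_lt_csSup hne hq
  exact hE.transl_subset_transl hlt.le hxq'

end

theorem stmt13_general (d : ℕ) (p : EuclideanSpace ℝ (Fin d)) (hp : ‖p‖ = 1)
    (M : ℝ) (a : ℝ) (E : Set (EuclideanSpace ℝ (Fin d)))
    (hupper : {x : EuclideanSpace ℝ (Fin d) | a + M < ⟪x, p⟫} ⊆ E)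
    (hlower : E ⊆ {x : EuclideanSpace ℝ (Fin d) | a - M < ⟪x, p⟫})
    (hBirkhoff : ∀ q : Fin d → ℤ, 0 ≤ ⟪vec q, p⟫ → transl E q ⊆ E) :
    (∀ x : EuclideanSpace ℝ (Fin d),
        {t : ℝ | ∃ q : Fin d → ℤ, t = ⟪vec q, p⟫ ∧ x ∈ transl E q}.Nonempty ∧
        BddAbove {t : ℝ | ∃ q : Fin d → ℤ, t = ⟪vec q, p⟫ ∧ x ∈ transl E q}) ∧
    (∀ q : Fin d → ℤ,
        {x : EuclideanSpace ℝ (Fin d) | ⟪vec q, p⟫ <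
            sSup {t : ℝ | ∃ q' : Fin d → ℤ, t = ⟪vec q', p⟫ ∧ x ∈ transl E q'}} ⊆
          transl E q ∧
        transl E q ⊆
          {x : EuclideanSpace ℝ (Fin d) | ⟪vec q, p⟫ ≤
            sSup {t : ℝ | ∃ q' : Fin d → ℤ, t = ⟪vec q', p⟫ ∧ x ∈ transl E q'}}) := by
  have hp0 : p ≠ 0 := norm_ne_zero_iff.1 (hp.trans_ne one_ne_zero)
  have hE : StrongBirkhoff E p := hBirkhoff
  have bounds (x : EuclideanSpace ℝ (Fin d)) :
      (heights E p x).Nonempty ∧ BddAbove (heights E p x) :=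
    ⟨heights_nonempty hp0 hupper x, bddAbove_heights hlower x⟩
  exact ⟨bounds, fun q =>
    ⟨fun x hx => hE.mem_transl_of_lt_sSup (bounds x).1 hx,
     fun x hx => le_csSup (bounds x).2 ⟨q, rfl, hx⟩⟩⟩

/-- For a plane-like set `E` in the unit direction `p` with the strong Birkhoff
property, the set `{q·p : q ∈ ℤ^d, x ∈ E + q}` is nonempty and bounded above for every
`x`, so its supremum `v(x)` is a well-defined real number, and
`{v > q·p} ⊆ E + q ⊆ {v ≥ q·p}` for every `q ∈ ℤ^d`. -/
theorem stmt13 (d : ℕ) (p : EuclideanSpace ℝ (Fin d)) (hp : ‖p‖ = 1)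
    (M : ℝ) (hM : 0 < M) (a : ℝ) (E : Set (EuclideanSpace ℝ (Fin d)))
    (hupper : {x : EuclideanSpace ℝ (Fin d) | a + M < ⟪x, p⟫} ⊆ E)
    (hlower : E ⊆ {x : EuclideanSpace ℝ (Fin d) | a - M < ⟪x, p⟫})
    (hBirkhoff : ∀ q : Fin d → ℤ, 0 ≤ ⟪vec q, p⟫ → transl E q ⊆ E) :
    (∀ x : EuclideanSpace ℝ (Fin d),
        {t : ℝ | ∃ q : Fin d → ℤ, t = ⟪vec q, p⟫ ∧ x ∈ transl E q}.Nonempty ∧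
        BddAbove {t : ℝ | ∃ q : Fin d → ℤ, t = ⟪vec q, p⟫ ∧ x ∈ transl E q}) ∧
    (∀ q : Fin d → ℤ,
        {x : EuclideanSpace ℝ (Fin d) | ⟪vec q, p⟫ <
            sSup {t : ℝ | ∃ q' : Fin d → ℤ, t = ⟪vec q', p⟫ ∧ x ∈ transl E q'}} ⊆
          transl E q ∧
        transl E q ⊆
          {x : EuclideanSpace ℝ (Fin d) | ⟪vec q, p⟫ ≤
            sSup {t : ℝ | ∃ q' : Fin d → ℤ, t = ⟪vec q', p⟫ ∧ x ∈ transl E q'}}) :=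
  stmt13_general d p hp M a E hupper hlower hBirkhoff
end
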